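/- Let p ∈ (1,∞). Then K(y) → 0 as y → 1⁻; consequently K is continuous on all of (0,1] (with K(1) = 0). -/
import Mathlib

open Set Real Filter MeasureTheory Topology

set_option maxHeartbeats 1000000

/-- `F_a(y,w)` from the paper (with parameter `p`). -/
noncomputable def Fa (p a y w : ℝ) : ℝ :=
  (8*p*(1/a + 2*y) + (2*p/a + 4*(3*p - 2)*y + 2*(p - 1)*y*w)*w) / (y^2 * (4 + (p - 1)*w))

/-- `G` is the family `a ↦ G_a` of solutions of `G_a' = -F_a(y, G_a)` on `(0,1)`
with `G_a(1) = 0`: each `G_a` is continuous on `(0,1]`, positive on `(0,1)` and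
strictly decreasing on `(0,1]`. -/
def IsGFamily (p : ℝ) (G : ℝ → ℝ → ℝ) : Prop :=
  ∀ a : ℝ, 0 < a →
    ContinuousOn (G a) (Set.Ioc 0 1) ∧
    G a 1 = 0 ∧
    (∀ y ∈ Set.Ioo (0:ℝ) 1, HasDerivAt (G a) (-(Fa p a y (G a y))) y) ∧
    (∀ y ∈ Set.Ioo (0:ℝ) 1, 0 < G a y) ∧
    StrictAntiOn (G a) (Set.Ioc 0 1)

lemma Fa_abs_bound (p a y w M y0 : ℝ) (hp : 1 < p) (ha : 1 ≤ a)
    (hy0 : 0 < y0) (hyl : y0 ≤ y) (hy1 : y ≤ 1) (hw0 : 0 ≤ w) (hwM : w ≤ M) :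
    |Fa p a y w| ≤ (24*p + (14*p - 8)*M + 2*(p-1)*M^2) / (4*y0^2) := by
  have ha0 : 0 < a := lt_of_lt_of_le one_pos ha
  have hb0 : 0 < 1/a := by positivity
  have hb1 : 1/a ≤ 1 := by rw [div_le_one ha0]; exact ha
  have hy : 0 < y := lt_of_lt_of_le hy0 hyl
  have hM0 : 0 ≤ M := le_trans hw0 hwM
  have hp1 : (0:ℝ) ≤ p - 1 := by linarith
  have hden : 0 < y^2 * (4 + (p-1)*w) := by nlinarith [mul_nonneg hp1 hw0, sq_nonneg y]
  have h2pa : 2*p/a ≤ 2*p := by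
    rw [div_le_iff₀ ha0]; nlinarith
  have h2pa0 : 0 ≤ 2*p/a := by positivity
  have hinner0 : 0 ≤ 2*p/a + 4*(3*p - 2)*y + 2*(p - 1)*y*w := by
    nlinarith [mul_nonneg (mul_nonneg hp1 hy.le) hw0]
  have hinner : 2*p/a + 4*(3*p - 2)*y + 2*(p - 1)*y*w ≤ 2*p + 4*(3*p-2) + 2*(p-1)*M := by
    nlinarith [mul_nonneg (by linarith : (0:ℝ) ≤ 3*p-2) (by linarith : (0:ℝ) ≤ 1 - y),
      mul_nonneg hp1 (mul_nonneg hw0 (by linarith : (0:ℝ) ≤ 1 - y)),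
      mul_nonneg hp1 (by linarith : (0:ℝ) ≤ M - w)]
  have hnum0 : 0 ≤ 8*p*(1/a + 2*y) + (2*p/a + 4*(3*p - 2)*y + 2*(p - 1)*y*w)*w := by
    nlinarith [mul_nonneg hinner0 hw0]
  have hA : 8*p*(1/a + 2*y) ≤ 24*p := by nlinarith
  have hB : (2*p/a + 4*(3*p - 2)*y + 2*(p - 1)*y*w)*w
      ≤ (14*p - 8)*M + 2*(p-1)*M^2 := by
    have := mul_le_mul hinner hwM hw0 (by nlinarith : (0:ℝ) ≤ 2*p + 4*(3*p-2) + 2*(p-1)*M)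
    nlinarith
  have hdenlb : 4*y0^2 ≤ y^2 * (4 + (p-1)*w) := by
    nlinarith [mul_nonneg hp1 hw0, sq_nonneg (y - y0), mul_nonneg (mul_nonneg hp1 hw0) (sq_nonneg y)]
  have hFa : Fa p a y w
      = (8*p*(1/a + 2*y) + (2*p/a + 4*(3*p - 2)*y + 2*(p - 1)*y*w)*w) / (y^2 * (4 + (p - 1)*w)) :=
    rfl
  rw [hFa, abs_of_nonneg (div_nonneg hnum0 hden.le)]
  exact div_le_div₀ (by nlinarith) (by linarith) (by positivity) hdenlb

/-- Uniform Lipschitz bound on `[y0, 1]` for `G a`, given a bound on `G a y0`. -/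
lemma G_lip (p : ℝ) (hp : 1 < p) (G : ℝ → ℝ → ℝ) (hG : IsGFamily p G)
    (a : ℝ) (ha : 1 ≤ a) (y0 M : ℝ) (hy0 : 0 < y0) (hy01 : y0 < 1) (hM : G a y0 ≤ M) :
    ∀ y ∈ Set.Icc y0 1, ∀ y' ∈ Set.Icc y0 1,
      |G a y - G a y'| ≤ ((24*p + (14*p - 8)*M + 2*(p-1)*M^2) / (4*y0^2)) * |y - y'| := by
  have ha0 : 0 < a := lt_of_lt_of_le one_pos ha
  obtain ⟨hcont, hG1, hderiv, hpos, hanti⟩ := hG a ha0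
  set L := (24*p + (14*p - 8)*M + 2*(p-1)*M^2) / (4*y0^2) with hL
  have hsub : Set.Ico y0 1 ⊆ Set.Ioo (0:ℝ) 1 := fun x hx => ⟨lt_of_lt_of_le hy0 hx.1, hx.2⟩
  have hsub' : Set.Ico y0 1 ⊆ Set.Ioc (0:ℝ) 1 := fun x hx => ⟨lt_of_lt_of_le hy0 hx.1, hx.2.le⟩
  -- Lipschitz on Ico y0 1
  have step1 : ∀ y ∈ Set.Ico y0 1, ∀ y' ∈ Set.Ico y0 1,
      |G a y - G a y'| ≤ L * |y - y'| := by
    intro y hy y' hy'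
    have := Convex.norm_image_sub_le_of_norm_hasDerivWithin_le
      (f := G a) (f' := fun x => -(Fa p a x (G a x))) (s := Set.Ico y0 1) (C := L)
      (fun x hx => (hderiv x (hsub hx)).hasDerivWithinAt)
      (fun x hx => by
        have hx' := hsub hx
        have hGle : G a x ≤ M := by
          rcases eq_or_lt_of_le hx.1 with h | h
          · rw [← h]; exact hM
          · exact le_trans (le_of_lt (hanti ⟨hy0, hy01.le⟩ ⟨hx'.1, hx'.2.le⟩ h)) hM
        have := Fa_abs_bound p a x (G a x) M y0 hp ha hy0 hx.1 hx.2.le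
          (hpos x hx').le hGle
        simpa [norm_neg, Real.norm_eq_abs] using this)
      (convex_Ico y0 1) hy' hy
    simpa [Real.norm_eq_abs] using this
  -- L * |y - y'| with nonneg L (needed below)
  have hL0 : 0 ≤ L := by
    rcases (Set.nonempty_Ico.2 hy01) with ⟨x, hx⟩
    have h1 := step1 x hx x hx
    by_contra h
    push_neg at h
    have hM0 : 0 ≤ M := le_trans (hpos y0 ⟨hy0, hy01⟩).le hM
    have : (0:ℝ) ≤ 24*p + (14*p - 8)*M + 2*(p-1)*M^2 := by nlinarith
    have : 0 ≤ L := by positivity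
    linarith
  -- extend to the endpoint 1 by continuity
  have step2 : ∀ y ∈ Set.Ico y0 1, |G a y - G a 1| ≤ L * |y - 1| := by
    intro y hy
    have hmemcl : (1:ℝ) ∈ closure (Set.Ioo y0 1) := by
      rw [closure_Ioo (ne_of_lt hy01)]; exact ⟨hy01.le, le_refl 1⟩
    have hNB : (𝓝[Set.Ioo y0 1] (1:ℝ)).NeBot := mem_closure_iff_nhdsWithin_neBot.1 hmemcl
    have hGt : Tendsto (G a) (𝓝[Set.Ioo y0 1] (1:ℝ)) (𝓝 (G a 1)) :=
      (hcont 1 ⟨one_pos, le_refl 1⟩).mono_left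
        (nhdsWithin_mono 1 (fun x hx => ⟨lt_trans hy0 hx.1, hx.2.le⟩))
    have hid : Tendsto (fun t : ℝ => t) (𝓝[Set.Ioo y0 1] (1:ℝ)) (𝓝 1) :=
      tendsto_id.mono_right nhdsWithin_le_nhds
    have hft : Tendsto (fun t => |G a y - G a t| - L * |y - t|) (𝓝[Set.Ioo y0 1] (1:ℝ))
        (𝓝 (|G a y - G a 1| - L * |y - 1|)) :=
      ((tendsto_const_nhds.sub hGt).abs).sub (((tendsto_const_nhds.sub hid).abs).const_mul L)
    have hev : ∀ᶠ t in 𝓝[Set.Ioo y0 1] (1:ℝ), |G a y - G a t| - L * |y - t| ≤ 0 := by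
      filter_upwards [self_mem_nhdsWithin] with t ht
      have := step1 y hy t ⟨ht.1.le, ht.2⟩
      linarith
    linarith [le_of_tendsto hft hev]
  intro y hy y' hy'
  rcases eq_or_lt_of_le hy.2 with h1 | h1
  · rcases eq_or_lt_of_le hy'.2 with h2 | h2
    · simp [h1, h2]
    · rw [h1, abs_sub_comm (G a 1), abs_sub_comm 1]
      exact step2 y' ⟨hy'.1, h2⟩
  · rcases eq_or_lt_of_le hy'.2 with h2 | h2
    · rw [h2]; exact step2 y ⟨hy.1, h1⟩
    · exact step1 y ⟨hy.1, h1⟩ y' ⟨hy'.1, h2⟩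

theorem K_tendsto_zero_at_one (p : ℝ) (hp : 1 < p) (G : ℝ → ℝ → ℝ) (K : ℝ → ℝ)
    (hG : IsGFamily p G)
    (hK : ∀ y ∈ Set.Ioc (0:ℝ) 1,
      Filter.Tendsto (fun a => G a y) Filter.atTop (nhds (K y))) :
    Filter.Tendsto K (nhdsWithin 1 (Set.Iio 1)) (nhds 0) ∧
    ContinuousOn K (Set.Ioc 0 1) := by
  -- K 1 = 0
  have hK1 : K 1 = 0 := by
    have h1 : Tendsto (fun a : ℝ => G a 1) atTop (𝓝 0) := by
      refine Tendsto.congr' ?_ tendsto_const_nhds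
      filter_upwards [eventually_ge_atTop (1:ℝ)] with a ha
      exact ((hG a (lt_of_lt_of_le one_pos ha)).2.1).symm
    exact tendsto_nhds_unique (hK 1 ⟨one_pos, le_refl 1⟩) h1
  -- K is nonnegative on Ioc 0 1
  have hKnn : ∀ y ∈ Set.Ioc (0:ℝ) 1, 0 ≤ K y := by
    intro y hy
    rcases eq_or_lt_of_le hy.2 with h | h
    · rw [h, hK1]
    · exact ge_of_tendsto (hK y ⟨hy.1, h.le⟩)
        ((eventually_ge_atTop (1:ℝ)).mono fun a ha =>
          ((hG a (lt_of_lt_of_le one_pos ha)).2.2.2.1 y ⟨hy.1, h⟩).le)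
  -- Lipschitz estimate for K on [y0, 1]
  have key : ∀ y0 : ℝ, 0 < y0 → y0 < 1 → ∃ C : ℝ, 0 ≤ C ∧
      ∀ y ∈ Set.Icc y0 1, ∀ y' ∈ Set.Icc y0 1, |K y - K y'| ≤ C * |y - y'| := by
    intro y0 hy0 hy01
    set M := K y0 + 1 with hMdef
    have hM0 : 0 ≤ M := by
      have := hKnn y0 ⟨hy0, hy01.le⟩; linarith
    set C := (24*p + (14*p - 8)*M + 2*(p-1)*M^2) / (4*y0^2) with hC
    have hC0 : 0 ≤ C := by
      have : (0:ℝ) ≤ 24*p + (14*p - 8)*M + 2*(p-1)*M^2 := by nlinarith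
      positivity
    refine ⟨C, hC0, ?_⟩
    intro y hy y' hy'
    have hev : ∀ᶠ a : ℝ in atTop, |G a y - G a y'| ≤ C * |y - y'| := by
      have hevM : ∀ᶠ a : ℝ in atTop, G a y0 < M :=
        (hK y0 ⟨hy0, hy01.le⟩).eventually_lt_const (by linarith)
      filter_upwards [eventually_ge_atTop (1:ℝ), hevM] with a ha haM
      exact G_lip p hp G hG a ha y0 M hy0 hy01 haM.le y hy y' hy'
    have ht : Tendsto (fun a : ℝ => |G a y - G a y'|) atTop (𝓝 (|K y - K y'|)) :=
      ((hK y ⟨lt_of_lt_of_le hy0 hy.1, hy.2⟩).sub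
        (hK y' ⟨lt_of_lt_of_le hy0 hy'.1, hy'.2⟩)).abs
    exact le_of_tendsto ht hev
  constructor
  · -- tendsto at 1 from the left
    obtain ⟨C, hC0, hC⟩ := key (1/2) (by norm_num) (by norm_num)
    have hev : ∀ᶠ y in 𝓝[Set.Iio (1:ℝ)] 1, ‖K y‖ ≤ C * |y - 1| := by
      filter_upwards [Ico_mem_nhdsLT_of_mem (by norm_num : (1:ℝ) ∈ Set.Ioc (1/2) 1)] with y hy
      have := hC y ⟨hy.1, hy.2.le⟩ 1 ⟨by norm_num, le_refl 1⟩
      rw [hK1] at this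
      simpa [Real.norm_eq_abs] using this
    have hg : Tendsto (fun y : ℝ => C * |y - 1|) (𝓝[Set.Iio (1:ℝ)] 1) (𝓝 0) := by
      have : Tendsto (fun y : ℝ => C * |y - 1|) (𝓝 (1:ℝ)) (𝓝 (C * |1 - 1|)) := by
        apply Tendsto.const_mul
        exact (continuous_abs.comp (continuous_id.sub continuous_const)).tendsto 1
      simpa using this.mono_left nhdsWithin_le_nhds
    exact squeeze_zero_norm' hev hg
  · -- continuity on Ioc 0 1
    intro y hy
    have hy02 : 0 < y / 2 := by linarith [hy.1]
    have hy21 : y / 2 < 1 := by linarith [hy.2]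
    obtain ⟨C, hC0, hC⟩ := key (y/2) hy02 hy21
    have hlip : LipschitzOnWith C.toNNReal K (Set.Icc (y/2) 1) := by
      apply LipschitzOnWith.of_dist_le_mul
      intro u hu v hv
      rw [Real.dist_eq, Real.dist_eq, Real.coe_toNNReal C hC0]
      exact hC u hu v hv
    have hcw : ContinuousWithinAt K (Set.Icc (y/2) 1) y :=
      hlip.continuousOn y ⟨by linarith [hy.1], hy.2⟩
    refine hcw.mono_of_mem_nhdsWithin ?_
    rw [mem_nhdsWithin]
    refine ⟨Set.Ioi (y/2), isOpen_Ioi, by simpa using hy02.trans_le (by linarith), ?_⟩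
    rintro t ⟨ht1, ht2⟩
    exact ⟨le_of_lt ht1, ht2.2⟩
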